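/- Let n > 0, let a < b be real numbers, and let θ, θ′ : ℝ → ℝ be such that for every t ∈ [a,b], θ has derivative θ′(t) at t (within [a,b]) and θ′(t) ≤ −θ(t)²/n. Suppose θ(a) < 0. Then b − a < n/(−θ(a)). Equivalently, a solution of the differential inequality θ′ ≤ −θ²/n with θ(a) < 0 cannot remain finite on any interval of length at least n/(−θ(a)). -/

import Mathlib

/-!
Along `[a, b]` the inequality gives `θ' ≤ 0`, so `θ ≤ θ a < 0` throughout. Then `1/θ` is
differentiable with `(1/θ)' = -θ'/θ² ≥ 1/n`, hence `1/θ b ≥ 1/θ a + (b - a)/n`. Since the left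
side is negative, `(b - a)/n < -1/θ a`.
-/

open Set

namespace Convex

variable {D : Set ℝ} {f f' : ℝ → ℝ}

theorem monotoneOn_of_hasDerivWithinAt_nonneg' (hD : Convex ℝ D)
    (hf : ∀ x ∈ D, HasDerivWithinAt f (f' x) D x) (hf' : ∀ x ∈ D, 0 ≤ f' x) :
    MonotoneOn f D :=
  monotoneOn_of_hasDerivWithinAt_nonneg hD (fun x hx => (hf x hx).continuousWithinAt)
    (fun x hx => (hf x (interior_subset hx)).mono interior_subset)
    (fun x hx => hf' x (interior_subset hx))

theorem antitoneOn_of_hasDerivWithinAt_nonpos' (hD : Convex ℝ D)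
    (hf : ∀ x ∈ D, HasDerivWithinAt f (f' x) D x) (hf' : ∀ x ∈ D, f' x ≤ 0) :
    AntitoneOn f D :=
  antitoneOn_of_hasDerivWithinAt_nonpos hD (fun x hx => (hf x hx).continuousWithinAt)
    (fun x hx => (hf x (interior_subset hx)).mono interior_subset)
    (fun x hx => hf' x (interior_subset hx))

end Convex

section RiccatiInequality

variable {n a b : ℝ} {θ θ' : ℝ → ℝ}

theorem neg_of_hasDerivWithinAt_le_neg_sq_div (hn : 0 < n)
    (hderiv : ∀ t ∈ Icc a b, HasDerivWithinAt θ (θ' t) (Icc a b) t)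
    (hineq : ∀ t ∈ Icc a b, θ' t ≤ -(θ t) ^ 2 / n) (ha : θ a < 0) :
    ∀ t ∈ Icc a b, θ t < 0 := by
  have hanti : AntitoneOn θ (Icc a b) :=
    (convex_Icc a b).antitoneOn_of_hasDerivWithinAt_nonpos' hderiv fun t ht =>
      (hineq t ht).trans (div_nonpos_of_nonpos_of_nonneg (neg_nonpos.2 (sq_nonneg _)) hn.le)
  intro t ht
  exact (hanti (left_mem_Icc.2 (ht.1.trans ht.2)) ht ht.1).trans_lt ha

theorem inv_add_sub_div_le_inv_of_hasDerivWithinAt_le_neg_sq_div (hn : 0 < n)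
    (hderiv : ∀ t ∈ Icc a b, HasDerivWithinAt θ (θ' t) (Icc a b) t)
    (hineq : ∀ t ∈ Icc a b, θ' t ≤ -(θ t) ^ 2 / n) (ha : θ a < 0) :
    ∀ t ∈ Icc a b, (θ a)⁻¹ + (t - a) / n ≤ (θ t)⁻¹ := by
  have hneg := neg_of_hasDerivWithinAt_le_neg_sq_div hn hderiv hineq ha
  have hmono : MonotoneOn (fun t => (θ t)⁻¹ - t / n) (Icc a b) := by
    refine (convex_Icc a b).monotoneOn_of_hasDerivWithinAt_nonneg'
      (f' := fun t => -θ' t / θ t ^ 2 - 1 / n)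
      (fun t ht => ((hderiv t ht).inv (hneg t ht).ne).sub ((hasDerivWithinAt_id t _).div_const n))
      fun t ht => ?_
    have hsq : 0 < θ t ^ 2 := sq_pos_of_neg (hneg t ht)
    have : 1 / n ≤ -θ' t / θ t ^ 2 := by
      rw [div_le_div_iff₀ hn hsq]
      nlinarith [(le_div_iff₀ hn).1 (hineq t ht)]
    linarith
  intro t ht
  have := hmono (left_mem_Icc.2 (ht.1.trans ht.2)) ht ht.1
  simp only at this
  rw [sub_div]
  linarith

end RiccatiInequality

/-- Finite-time blow-up (caustic formation): a solution of `θ' ≤ -θ²/n` with `θ a < 0`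
cannot remain finite on an interval of length at least `n/(-θ a)`. -/
theorem stmt_6 (n : ℝ) (hn : 0 < n) (a b : ℝ) (hab : a < b)
    (θ θ' : ℝ → ℝ)
    (hderiv : ∀ t ∈ Set.Icc a b, HasDerivWithinAt θ (θ' t) (Set.Icc a b) t)
    (hineq : ∀ t ∈ Set.Icc a b, θ' t ≤ -(θ t) ^ 2 / n)
    (ha : θ a < 0) :
    b - a < n / (-θ a) := by
  have hb : b ∈ Icc a b := right_mem_Icc.2 hab.le
  have hθb := neg_of_hasDerivWithinAt_le_neg_sq_div hn hderiv hineq ha b hb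
  have hcomp := inv_add_sub_div_le_inv_of_hasDerivWithinAt_le_neg_sq_div hn hderiv hineq ha b hb
  have : (b - a) / n < (-θ a)⁻¹ := by
    rw [inv_neg]
    linarith [inv_lt_zero.2 hθb]
  rwa [div_lt_iff₀ hn, ← div_eq_inv_mul] at this
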